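/- arXiv:1206.5350 — 3 statements merged into one kernel-verified Lean document; each statement's English description precedes it below -/
import Mathlib

section
/- For every positive integer k, every good placement of queens on the n × n board B_n with n = 4k + 1 has size at least n. -/
/-- The n × n board: squares {1,…,n} × {1,…,n} ⊆ ℤ². -/
noncomputable def board (n : ℕ) : Finset (ℤ × ℤ) :=
  Finset.Icc (1 : ℤ) n ×ˢ Finset.Icc (1 : ℤ) n

/-- Two squares share a column, row, diagonal, or antidiagonal. -/
def SameLine (a b : ℤ × ℤ) : Prop :=
  a.1 = b.1 ∨ a.2 = b.2 ∨ a.1 - a.2 = b.1 - b.2 ∨ a.1 + a.2 = b.1 + b.2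

/-- A set of squares contains three (pairwise distinct) squares in a line. -/
def ThreeInLine (S : Finset (ℤ × ℤ)) : Prop :=
  ∃ a ∈ S, ∃ b ∈ S, ∃ c ∈ S, a ≠ b ∧ a ≠ c ∧ b ≠ c ∧
    ((a.1 = b.1 ∧ b.1 = c.1) ∨ (a.2 = b.2 ∧ b.2 = c.2) ∨
     (a.1 - a.2 = b.1 - b.2 ∧ b.1 - b.2 = c.1 - c.2) ∨
     (a.1 + a.2 = b.1 + b.2 ∧ b.1 + b.2 = c.1 + c.2))

/-- A good placement on B_n: a subset of the board with no three in a line,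
    such that adding any unoccupied square of the board creates three in a line. -/
def IsGoodPlacement (n : ℕ) (Q : Finset (ℤ × ℤ)) : Prop :=
  Q ⊆ board n ∧ ¬ ThreeInLine Q ∧
    ∀ s ∈ board n, s ∉ Q → ThreeInLine (insert s Q)

/-!
Suppose a good placement `Q` on `B_n`, `n = 4k + 1`, has at most `4k` queens, and call a line
full if it carries two queens. The columns and rows that are not full span a grid `S × T`, and
every square of it either is a queen on no full line or lies on a full diagonal or antidiagonal
(otherwise it could be added to `Q`). So `S × T` is covered by `b` diagonals `x - y = d` and
`a` antidiagonals `x + y = s`, and counting queens gives `a + b ≤ |S| + |T| - 2`.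

By the Combinatorial Nullstellensatz, applied to the product of the forms `x - y - d` and
`x + y - s` padded to total degree `|S| + |T| - 2`, the coefficient of `X ^ (|S| - 1)` in
`(X - 1) ^ b (X + 1) ^ a` vanishes. If `a + b < |S| + |T| - 2` the padding can be chosen in two
ways, which gives two consecutive vanishing coefficients of some `g = (X - 1) ^ b (X + 1) ^ a`;
this is impossible, since `(X² - 1) g' = ((b + a) X + b - a) g` yields a three-term recurrence
that would make the leading coefficient vanish. Otherwise the counting is tight and forces
`|S| = |T| = 2k + 1`, `a = b = 2k`, where the coefficient is `± (2k choose k) ≠ 0`.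
-/

open Finset

namespace Polynomial

variable {R : Type*} [CommRing R]

theorem X_sub_C_mul_derivative_X_sub_C_pow (c : R) (n : ℕ) :
    (X - C c) * derivative ((X - C c) ^ n) = C (n : R) * (X - C c) ^ n := by
  rcases n with _ | n
  · simp
  · rw [derivative_X_sub_C_pow, Nat.add_sub_cancel, pow_succ]
    ring

theorem X_sq_sub_one_mul_derivative_X_sub_one_pow_mul_X_add_one_pow (b a : ℕ) :
    (X ^ 2 - 1) * derivative ((X - 1) ^ b * (X + 1) ^ a : R[X]) =
      (C ((b : R) + a) * X + C ((b : R) - a)) * ((X - 1) ^ b * (X + 1) ^ a) := by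
  have hb := X_sub_C_mul_derivative_X_sub_C_pow (1 : R) b
  have ha := X_sub_C_mul_derivative_X_sub_C_pow (-1 : R) a
  simp only [map_one, map_neg, sub_neg_eq_add] at hb ha
  simp only [derivative_mul, map_add, map_sub]
  linear_combination ((X : R[X]) + 1) * (X + 1) ^ a * hb + (X - 1) * (X - 1) ^ b * ha

theorem coeff_eq_zero_of_X_sq_sub_one_mul_derivative_eq [IsDomain R] [CharZero R]
    {g : R[X]} {s d : R} (hg : (X ^ 2 - 1) * derivative g = (C s * X + C d) * g) {i : ℕ}
    (hi : 1 ≤ i) (h₀ : g.coeff i = 0) (h₁ : g.coeff (i + 1) = 0) {j : ℕ} (hj : i ≤ j) :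
    g.coeff j = 0 := by
  have step : ∀ n, 1 ≤ n → g.coeff n = 0 → g.coeff (n + 1) = 0 → g.coeff (n + 2) = 0 := by
    intro n hn hn₀ hn₁
    obtain ⟨m, rfl⟩ : ∃ m, n = m + 1 := ⟨n - 1, by omega⟩
    -- coefficient of `X ^ (m + 2)`: `(m+1) g[m+1] - (m+3) g[m+3] = s g[m+1] + d g[m+2]`
    have h := congrArg (coeff · (m + 2)) hg
    simp only [sub_mul, one_mul, coeff_sub, add_mul, coeff_add, mul_assoc, coeff_C_mul,
      coeff_X_mul, coeff_derivative, coeff_X_pow_mul', if_pos (by omega : 2 ≤ m + 2),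
      Nat.add_sub_cancel, hn₀, hn₁] at h
    have hne : (m : R) + 2 + 1 ≠ 0 := by exact_mod_cast (by omega : m + 2 + 1 ≠ 0)
    simpa [hne] using h
  obtain ⟨l, rfl⟩ := Nat.exists_eq_add_of_le hj
  suffices g.coeff (i + l) = 0 ∧ g.coeff (i + l + 1) = 0 from this.1
  clear hj
  induction l with
  | zero => exact ⟨h₀, h₁⟩
  | succ l ih => exact ⟨ih.2, step (i + l) (by omega) ih.1 ih.2⟩

theorem coeff_X_sub_one_pow_mul_X_add_one_pow_ne_zero_or [IsDomain R] [CharZero R]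
    {b a i : ℕ} (hi : 1 ≤ i) (hib : i ≤ b + a) :
    ((X - 1) ^ b * (X + 1) ^ a : R[X]).coeff i ≠ 0 ∨
      ((X - 1) ^ b * (X + 1) ^ a : R[X]).coeff (i + 1) ≠ 0 := by
  have hmon : ((X - 1) ^ b * (X + 1) ^ a : R[X]).Monic := by
    simpa using ((monic_X_sub_C (1 : R)).pow b).mul ((monic_X_add_C (1 : R)).pow a)
  have hdeg : ((X - 1) ^ b * (X + 1) ^ a : R[X]).natDegree = b + a := by
    compute_degree!
  by_contra! h
  have := coeff_eq_zero_of_X_sq_sub_one_mul_derivative_eq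
    (X_sq_sub_one_mul_derivative_X_sub_one_pow_mul_X_add_one_pow b a) hi h.1 h.2 hib
  rw [← hdeg, hmon.coeff_natDegree] at this
  exact one_ne_zero this

theorem coeff_X_sub_one_pow_mul_X_add_one_pow_self_ne_zero [IsDomain R] [CharZero R] (k : ℕ) :
    ((X - 1) ^ (2 * k) * (X + 1) ^ (2 * k) : R[X]).coeff (2 * k) ≠ 0 := by
  have h : ((X - 1) ^ (2 * k) * (X + 1) ^ (2 * k) : R[X]) =
      expand R 2 ((X + C (-1)) ^ (2 * k)) := by
    rw [← mul_pow, map_pow, map_add, expand_X, expand_C]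
    simp only [map_neg, map_one]
    ring
  rw [h, coeff_expand two_pos, if_pos (dvd_mul_right 2 k), Nat.mul_div_cancel_left k two_pos,
    coeff_X_add_C_pow, show 2 * k - k = k by omega]
  exact mul_ne_zero (pow_ne_zero _ (neg_ne_zero.mpr one_ne_zero))
    (Nat.cast_ne_zero.mpr (Nat.choose_pos (by omega)).ne')

end Polynomial

namespace MvPolynomial

variable {σ R : Type*} [CommRing R]

theorem homogeneousComponent_mul_of_totalDegree_le {f g : MvPolynomial σ R} {m n : ℕ}
    (hf : f.totalDegree ≤ m) (hg : g.totalDegree ≤ n) :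
    homogeneousComponent (m + n) (f * g) =
      homogeneousComponent m f * homogeneousComponent n g := by
  classical
  ext d
  rw [coeff_homogeneousComponent]
  split_ifs with hd
  · rw [coeff_mul, coeff_mul]
    refine Finset.sum_congr rfl fun x hx => ?_
    rw [HasAntidiagonal.mem_antidiagonal] at hx
    have hdeg : x.1.degree + x.2.degree = m + n := by rw [← map_add, hx, hd]
    rw [coeff_homogeneousComponent, coeff_homogeneousComponent]
    by_cases h1 : x.1.degree = m
    · rw [if_pos h1, if_pos (by omega)]
    rw [if_neg h1, zero_mul]
    rcases lt_or_gt_of_ne h1 with h1 | h1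
    · rw [coeff_eq_zero_of_totalDegree_lt (hg.trans_lt (by rw [← Finsupp.degree_apply]; omega)),
        mul_zero]
    · rw [coeff_eq_zero_of_totalDegree_lt (hf.trans_lt h1), zero_mul]
  · exact (((homogeneousComponent_isHomogeneous m f).mul
      (homogeneousComponent_isHomogeneous n g)).coeff_eq_zero hd).symm

theorem totalDegree_prod_map_sub_C_le {L : MvPolynomial σ R} (hL : L.IsHomogeneous 1)
    (m : Multiset R) : (m.map fun r => L - C r).prod.totalDegree ≤ Multiset.card m := by
  refine (totalDegree_multiset_prod _).trans ?_
  refine (Multiset.sum_le_card_nsmul _ 1 fun x hx => ?_).trans (by simp)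
  obtain ⟨r, -, rfl⟩ := by simpa using hx
  exact (totalDegree_sub_C_le L r).trans hL.totalDegree_le

theorem homogeneousComponent_prod_map_sub_C {L : MvPolynomial σ R} (hL : L.IsHomogeneous 1)
    (m : Multiset R) :
    homogeneousComponent (Multiset.card m) (m.map fun r => L - C r).prod = L ^ Multiset.card m := by
  induction m using Multiset.induction_on with
  | empty => simp
  | cons r m ih =>
    rw [Multiset.map_cons, Multiset.prod_cons, Multiset.card_cons, add_comm,
      homogeneousComponent_mul_of_totalDegree_le ((totalDegree_sub_C_le L r).trans
        hL.totalDegree_le) (totalDegree_prod_map_sub_C_le hL m), ih, map_sub,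
      homogeneousComponent_eq_self hL, homogeneousComponent_of_mem (isHomogeneous_C σ r),
      if_neg one_ne_zero, sub_zero, Nat.add_comm 1, pow_succ']

theorem IsHomogeneous.coeff_eq_coeff_aeval {F : MvPolynomial (Fin 2) R} {N : ℕ}
    (hF : F.IsHomogeneous N) {d : Fin 2 →₀ ℕ} (hd : d.degree = N) :
    F.coeff d = (MvPolynomial.aeval ![Polynomial.X, 1] F).coeff (d 0) := by
  conv_rhs => rw [F.as_sum, map_sum, Polynomial.finsetSum_coeff]
  simp only [aeval_monomial, Finsupp.prod_fintype _ _ (fun _ => pow_zero _), Fin.prod_univ_two,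
    Matrix.cons_val_zero, Matrix.cons_val_one, one_pow, mul_one, Polynomial.algebraMap_eq,
    Polynomial.coeff_C_mul_X_pow]
  rw [Finset.sum_eq_single d]
  · simp
  · intro e he hne
    have he' : e.degree = N := by
      rw [Finsupp.degree_eq_weight_one]; exact hF (mem_support_iff.mp he)
    rw [Finsupp.degree_eq_sum, Fin.sum_univ_two] at he' hd
    refine if_neg fun h => hne (Finsupp.ext fun i => ?_)
    fin_cases i <;> simp <;> omega
  · intro hd
    simp [notMem_support_iff.mp hd]

end MvPolynomial

section DiagonalCover

variable {R : Type*} [CommRing R] [IsDomain R]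

def DiagonalCover (S T D A : Finset R) : Prop :=
  ∀ x ∈ S, ∀ y ∈ T, x - y ∈ D ∨ x + y ∈ A

variable {S T D A : Finset R}

open MvPolynomial in
theorem DiagonalCover.coeff_X_sub_one_pow_mul_X_add_one_pow_eq_zero
    (hcover : DiagonalCover S T D A) (hS : S.Nonempty) (hT : T.Nonempty) {b a : ℕ}
    (hD : #D ≤ b) (hA : #A ≤ a) (hba : b + a = (#S - 1) + (#T - 1)) :
    ((Polynomial.X - 1) ^ b * (Polynomial.X + 1) ^ a : Polynomial R).coeff (#S - 1) = 0 := by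
  set Dm : Multiset R := D.val + Multiset.replicate (b - #D) 0
  set Am : Multiset R := A.val + Multiset.replicate (a - #A) 0
  have hDm : Multiset.card Dm = b := by simp [Dm]; omega
  have hAm : Multiset.card Am = a := by simp [Am]; omega
  have hdiag : (X 0 - X 1 : MvPolynomial (Fin 2) R).IsHomogeneous 1 :=
    (isHomogeneous_X R 0).sub (isHomogeneous_X R 1)
  have hanti : (X 0 + X 1 : MvPolynomial (Fin 2) R).IsHomogeneous 1 :=
    (isHomogeneous_X R 0).add (isHomogeneous_X R 1)
  set f : MvPolynomial (Fin 2) R :=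
    (Dm.map fun d => X 0 - X 1 - C d).prod * (Am.map fun s => X 0 + X 1 - C s).prod
  have hdeg : f.totalDegree ≤ b + a := hDm ▸ hAm ▸ (totalDegree_mul _ _).trans
    (add_le_add (totalDegree_prod_map_sub_C_le hdiag Dm) (totalDegree_prod_map_sub_C_le hanti Am))
  have htop : homogeneousComponent (b + a) f = (X 0 - X 1) ^ b * (X 0 + X 1) ^ a := by
    rw [← hDm, ← hAm, homogeneousComponent_mul_of_totalDegree_le
      (totalDegree_prod_map_sub_C_le hdiag Dm) (totalDegree_prod_map_sub_C_le hanti Am),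
      homogeneousComponent_prod_map_sub_C hdiag, homogeneousComponent_prod_map_sub_C hanti]
  set t : Fin 2 →₀ ℕ := Finsupp.single 0 (#S - 1) + Finsupp.single 1 (#T - 1)
  have ht : t.degree = b + a := by simp only [t, map_add, Finsupp.degree_single]; omega
  have hcoeff : f.coeff t =
      ((Polynomial.X - 1) ^ b * (Polynomial.X + 1) ^ a : Polynomial R).coeff (#S - 1) := by
    have h := coeff_homogeneousComponent (b + a) f t
    rw [if_pos ht] at h
    rw [← h, (homogeneousComponent_isHomogeneous _ _).coeff_eq_coeff_aeval ht, htop]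
    simp [t]
  by_contra hne
  rw [← hcoeff] at hne
  obtain ⟨s, hs, hne⟩ := combinatorial_nullstellensatz_exists_eval_nonzero f t hne
    (le_antisymm (ht ▸ hdeg) (le_totalDegree (mem_support_iff.mpr hne))) ![S, T]
    (by intro i; fin_cases i <;> simp [t] <;> omega)
  refine hne ?_
  simp only [f, map_mul, map_multiset_prod, Multiset.map_map]
  rcases hcover (s 0) (hs 0) (s 1) (hs 1) with h | h
  · refine mul_eq_zero_of_left (Multiset.prod_eq_zero (Multiset.mem_map.mpr ?_)) _
    exact ⟨s 0 - s 1, Multiset.mem_add.mpr (.inl h), by simp⟩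
  · refine mul_eq_zero_of_right _ (Multiset.prod_eq_zero (Multiset.mem_map.mpr ?_))
    exact ⟨s 0 + s 1, Multiset.mem_add.mpr (.inl h), by simp⟩

variable [CharZero R]

open Polynomial in
theorem DiagonalCover.card_add_card_sub_two_le (hcover : DiagonalCover S T D A) (hS : 3 ≤ #S)
    (hT : T.Nonempty) : #S + #T - 2 ≤ #D + #A := by
  by_contra! h
  have hS' : S.Nonempty := card_pos.mp (by omega)
  have hT' := hT.card_pos
  obtain ⟨b, hDb, hb⟩ : ∃ b, #D ≤ b ∧ b + #A + 1 = #S - 1 + (#T - 1) :=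
    ⟨#S + #T - 3 - #A, by omega, by omega⟩
  set g : R[X] := (X - 1) ^ b * (X + 1) ^ #A
  obtain ⟨e, he⟩ : ∃ e, #S - 1 = e + 1 := ⟨#S - 2, by omega⟩
  have h₁ := hcover.coeff_X_sub_one_pow_mul_X_add_one_pow_eq_zero hS' hT
    (b := b + 1) (a := #A) (by omega) le_rfl (by omega)
  have h₂ := hcover.coeff_X_sub_one_pow_mul_X_add_one_pow_eq_zero hS' hT
    (b := b) (a := #A + 1) (by omega) (by omega) (by omega)
  rw [pow_succ', mul_assoc, he, sub_mul, one_mul, coeff_sub, coeff_X_mul] at h₁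
  rw [pow_succ', mul_left_comm, he, add_mul, one_mul, coeff_add, coeff_X_mul] at h₂
  have he₀ : g.coeff e = 0 := by
    have : (2 : R) * g.coeff e = 0 := by linear_combination h₁ + h₂
    simpa using this
  have he₁ : g.coeff (e + 1) = 0 := by linear_combination he₀ - h₁
  rcases coeff_X_sub_one_pow_mul_X_add_one_pow_ne_zero_or (R := R) (b := b) (a := #A) (i := e)
    (by omega) (by omega) with h | h
  exacts [h he₀, h he₁]

theorem DiagonalCover.two_mul_lt_card (hcover : DiagonalCover S T D A) {k : ℕ}
    (hS : #S = 2 * k + 1) (hT : #T = 2 * k + 1) (hD : #D ≤ 2 * k) : 2 * k < #A := by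
  by_contra! hA
  have h := hcover.coeff_X_sub_one_pow_mul_X_add_one_pow_eq_zero (card_pos.mp (by omega))
    (card_pos.mp (by omega)) hD hA (by omega)
  rw [hS, Nat.add_sub_cancel] at h
  exact Polynomial.coeff_X_sub_one_pow_mul_X_add_one_pow_self_ne_zero k h

end DiagonalCover

section FullLines

variable {α β : Type*} [DecidableEq β]

def fullLines (Q : Finset α) (ℓ : α → β) : Finset β :=
  {v ∈ Q.image ℓ | 2 ≤ #{q ∈ Q | ℓ q = v}}

theorem mem_fullLines {Q : Finset α} {ℓ : α → β} {v : β} :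
    v ∈ fullLines Q ℓ ↔ 2 ≤ #{q ∈ Q | ℓ q = v} := by
  refine ⟨fun h => (mem_filter.mp h).2, fun h => mem_filter.mpr ⟨?_, h⟩⟩
  obtain ⟨q, hq⟩ := card_pos.mp (lt_of_lt_of_le two_pos h)
  exact mem_image.mpr ⟨q, (mem_filter.mp hq).1, (mem_filter.mp hq).2⟩

theorem two_mul_card_fullLines_add_card_le {Q W : Finset α} {ℓ : α → β} (hWQ : W ⊆ Q)
    (hW : ∀ w ∈ W, ℓ w ∉ fullLines Q ℓ) : 2 * #(fullLines Q ℓ) + #W ≤ #Q := by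
  have hfull : 2 * #(fullLines Q ℓ) ≤ #{q ∈ Q | ℓ q ∈ fullLines Q ℓ} :=
    calc 2 * #(fullLines Q ℓ)
        = ∑ _v ∈ fullLines Q ℓ, 2 := by rw [sum_const, smul_eq_mul, mul_comm]
      _ ≤ ∑ v ∈ fullLines Q ℓ, #{q ∈ Q | ℓ q = v} := sum_le_sum fun v hv => mem_fullLines.mp hv
      _ = #{q ∈ Q | ℓ q ∈ fullLines Q ℓ} := by
        rw [card_eq_sum_card_fiberwise (s := {q ∈ Q | ℓ q ∈ fullLines Q ℓ})
          fun q hq => (mem_filter.mp hq).2]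
        refine sum_congr rfl fun v hv => ?_
        rw [filter_filter]
        refine congrArg card (filter_congr fun q _ => ?_)
        exact ⟨fun h => ⟨h ▸ hv, h⟩, fun h => h.2⟩
  have hrest : #W ≤ #{q ∈ Q | ℓ q ∉ fullLines Q ℓ} :=
    card_le_card fun w hw => mem_filter.mpr ⟨hWQ hw, hW w hw⟩
  have := card_filter_add_card_filter_not (s := Q) (fun q => ℓ q ∈ fullLines Q ℓ)
  omega

end FullLines

def lineCoord : Fin 4 → ℤ × ℤ → ℤ :=
  ![Prod.fst, Prod.snd, fun q => q.1 - q.2, fun q => q.1 + q.2]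

theorem threeInLine_iff {S : Finset (ℤ × ℤ)} :
    ThreeInLine S ↔ ∃ i v, 2 < #{q ∈ S | lineCoord i q = v} := by
  constructor
  · rintro ⟨a, ha, b, hb, c, hc, hab, hac, hbc, hline⟩
    obtain ⟨i, hi⟩ : ∃ i, lineCoord i b = lineCoord i a ∧ lineCoord i c = lineCoord i a := by
      rcases hline with h | h | h | h
      exacts [⟨0, by simp [lineCoord]; omega⟩, ⟨1, by simp [lineCoord]; omega⟩,
        ⟨2, by simp [lineCoord]; omega⟩, ⟨3, by simp [lineCoord]; omega⟩]
    exact ⟨i, lineCoord i a, two_lt_card.mpr ⟨a, mem_filter.mpr ⟨ha, rfl⟩, b,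
      mem_filter.mpr ⟨hb, hi.1⟩, c, mem_filter.mpr ⟨hc, hi.2⟩, hab, hac, hbc⟩⟩
  · rintro ⟨i, v, h⟩
    obtain ⟨a, ha, b, hb, c, hc, hab, hac, hbc⟩ := two_lt_card.mp h
    rw [mem_filter] at ha hb hc
    refine ⟨a, ha.1, b, hb.1, c, hc.1, hab, hac, hbc, ?_⟩
    have := ha.2.trans hb.2.symm
    have := hb.2.trans hc.2.symm
    fin_cases i <;> simp_all [lineCoord]

def isolatedQueens (Q : Finset (ℤ × ℤ)) : Finset (ℤ × ℤ) :=
  {q ∈ Q | ∀ i, lineCoord i q ∉ fullLines Q (lineCoord i)}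

namespace IsGoodPlacement

variable {n : ℕ} {Q : Finset (ℤ × ℤ)}

theorem exists_lineCoord_mem_fullLines (hQ : IsGoodPlacement n Q) {s : ℤ × ℤ}
    (hs : s ∈ board n) (hsQ : s ∉ Q) : ∃ i, lineCoord i s ∈ fullLines Q (lineCoord i) := by
  obtain ⟨i, v, hv⟩ := threeInLine_iff.mp (hQ.2.2 s hs hsQ)
  rw [filter_insert] at hv
  split_ifs at hv with hsv
  · refine ⟨i, mem_fullLines.mpr ?_⟩
    have := card_insert_le s {q ∈ Q | lineCoord i q = v}
    rw [hsv]
    omega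
  · exact absurd (threeInLine_iff.mpr ⟨i, v, hv⟩) hQ.2.1

theorem diagonalCover (hQ : IsGoodPlacement n Q) :
    DiagonalCover (Icc (1 : ℤ) n \ fullLines Q (lineCoord 0))
      (Icc (1 : ℤ) n \ fullLines Q (lineCoord 1))
      (fullLines Q (lineCoord 2) ∪ (isolatedQueens Q).image (lineCoord 2))
      (fullLines Q (lineCoord 3)) := by
  intro x hx y hy
  rw [mem_sdiff] at hx hy
  by_cases h : ∃ i, lineCoord i (x, y) ∈ fullLines Q (lineCoord i)
  · obtain ⟨i, hi⟩ := h
    fin_cases i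
    · exact absurd hi hx.2
    · exact absurd hi hy.2
    · exact .inl (mem_union_left _ hi)
    · exact .inr hi
  · have hxy : (x, y) ∈ Q := by
      by_contra hxy
      exact h (hQ.exists_lineCoord_mem_fullLines (mem_product.mpr ⟨hx.1, hy.1⟩) hxy)
    push Not at h
    exact .inl (mem_union_right _ (mem_image.mpr ⟨(x, y), mem_filter.mpr ⟨hxy, h⟩, rfl⟩))

end IsGoodPlacement

theorem stmt_1 (k n : ℕ) (hk : 1 ≤ k) (hn : n = 4 * k + 1)
    (Q : Finset (ℤ × ℤ)) (hQ : IsGoodPlacement n Q) : n ≤ Q.card := by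
  by_contra! hQn
  set F : Fin 4 → Finset ℤ := fun i => fullLines Q (lineCoord i)
  have hcount : ∀ i, 2 * #(F i) + #(isolatedQueens Q) ≤ #Q := fun i =>
    two_mul_card_fullLines_add_card_le (filter_subset _ _) fun q hq => (mem_filter.mp hq).2 i
  have hIcc : #(Icc (1 : ℤ) n) = n := by simp
  have hS := le_card_sdiff (F 0) (Icc (1 : ℤ) n)
  have hT := le_card_sdiff (F 1) (Icc (1 : ℤ) n)
  have hD : #(F 2 ∪ (isolatedQueens Q).image (lineCoord 2)) ≤ #(F 2) + #(isolatedQueens Q) :=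
    (card_union_le _ _).trans (Nat.add_le_add_left card_image_le _)
  have hcover : DiagonalCover (Icc (1 : ℤ) n \ F 0) (Icc (1 : ℤ) n \ F 1)
      (F 2 ∪ (isolatedQueens Q).image (lineCoord 2)) (F 3) := hQ.diagonalCover
  have h₀ := hcount 0
  have h₁ := hcount 1
  have h₂ := hcount 2
  have h₃ := hcount 3
  -- Summed, the four counts meet `hlines` only if every `F i` has `2k` elements and no queen
  -- is isolated, so that the grid is `(2k + 1) × (2k + 1)`.
  have hlines := hcover.card_add_card_sub_two_le (by omega) (card_pos.mp (by omega))
  exact (hcover.two_mul_lt_card (k := k) (by omega) (by omega) (by omega)).not_ge (by omega)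
end

section
/- Let k be a positive integer and let α_1,…,α_{2k}, β_1,…,β_{2k}, γ_1,…,γ_{2k}, δ_1,…,δ_{2k} be real numbers. In the polynomial f(x,y) = ∏_{j=1}^{2k} (x − α_j)(y − β_j)(x − y − γ_j)(x + y − δ_j) in ℝ[x,y], the coefficient of the monomial x^{4k} y^{4k} equals (−1)^k · C(2k, k), where C(2k,k) is the central binomial coefficient; in particular, this coefficient is nonzero and equals the total-degree-8k part's coefficient of x^{4k}y^{4k}. -/
open MvPolynomial Finset

noncomputable def PP : MvPolynomial (Fin 2) ℝ := X 0 * X 1 * (X 0 - X 1) * (X 0 + X 1)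

lemma deg_mul_le {p q : MvPolynomial (Fin 2) ℝ} {m n : ℕ}
    (hp : p.totalDegree ≤ m) (hq : q.totalDegree ≤ n) : (p * q).totalDegree ≤ m + n :=
  le_trans (totalDegree_mul _ _) (add_le_add hp hq)

lemma degCmul (a : ℝ) (p : MvPolynomial (Fin 2) ℝ) :
    (C a * p).totalDegree ≤ p.totalDegree := by
  simpa using deg_mul_le (m := 0) (by simp) (le_refl p.totalDegree)

lemma degCC (a b : ℝ) : ((C a * C b : MvPolynomial (Fin 2) ℝ)).totalDegree ≤ 1 :=
  le_trans (degCmul _ _) (by simp)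

lemma deg_s (a b : ℝ) :
    ((C a * X 1 + C b * X 0 - C a * C b : MvPolynomial (Fin 2) ℝ)).totalDegree ≤ 1 := by
  refine le_trans (totalDegree_sub _ _) (max_le ?_ (degCC a b))
  refine le_trans (totalDegree_add _ _) (max_le ?_ ?_)
  · exact le_trans (degCmul _ _) (by simp [totalDegree_X])
  · exact le_trans (degCmul _ _) (by simp [totalDegree_X])

lemma deg_xpm : ((X 0 - X 1 : MvPolynomial (Fin 2) ℝ)).totalDegree ≤ 1 :=
  le_trans (totalDegree_sub _ _) (by simp [totalDegree_X])

lemma deg_xpp : ((X 0 + X 1 : MvPolynomial (Fin 2) ℝ)).totalDegree ≤ 1 :=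
  le_trans (totalDegree_add _ _) (by simp [totalDegree_X])

lemma deg_t (c d : ℝ) :
    ((C c * (X 0 + X 1) + C d * (X 0 - X 1) - C c * C d : MvPolynomial (Fin 2) ℝ)).totalDegree ≤ 1 := by
  refine le_trans (totalDegree_sub _ _) (max_le ?_ (degCC c d))
  refine le_trans (totalDegree_add _ _) (max_le ?_ ?_)
  · exact le_trans (degCmul _ _) deg_xpp
  · exact le_trans (degCmul _ _) deg_xpm

lemma degX : (X (0 : Fin 2) : MvPolynomial (Fin 2) ℝ).totalDegree ≤ 1 := by
  simp [totalDegree_X]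

lemma degX1 : (X (1 : Fin 2) : MvPolynomial (Fin 2) ℝ).totalDegree ≤ 1 := by
  simp [totalDegree_X]

lemma degP : PP.totalDegree ≤ 4 :=
  deg_mul_le (deg_mul_le (deg_mul_le degX degX1) deg_xpm) deg_xpp

lemma degXsubC (i : Fin 2) (a : ℝ) : ((X i - C a : MvPolynomial (Fin 2) ℝ)).totalDegree ≤ 1 :=
  le_trans (totalDegree_sub _ _) (by simp [totalDegree_X])

lemma degXXsubC (a : ℝ) (p : MvPolynomial (Fin 2) ℝ) (hp : p.totalDegree ≤ 1) :
    ((p - C a : MvPolynomial (Fin 2) ℝ)).totalDegree ≤ 1 :=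
  le_trans (totalDegree_sub _ _) (by simp [hp])

lemma degF (a b c d : ℝ) :
    (((X 0 - C a) * (X 1 - C b) * (X 0 - X 1 - C c) * (X 0 + X 1 - C d) :
      MvPolynomial (Fin 2) ℝ)).totalDegree ≤ 4 :=
  deg_mul_le (deg_mul_le (deg_mul_le (degXsubC 0 a) (degXsubC 1 b))
    (degXXsubC c _ deg_xpm)) (degXXsubC d _ deg_xpp)

lemma degF_sub_P (a b c d : ℝ) :
    (((X 0 - C a) * (X 1 - C b) * (X 0 - X 1 - C c) * (X 0 + X 1 - C d) :
      MvPolynomial (Fin 2) ℝ) - PP).totalDegree ≤ 3 := by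
  set s : MvPolynomial (Fin 2) ℝ := C a * X 1 + C b * X 0 - C a * C b with hs
  set t : MvPolynomial (Fin 2) ℝ := C c * (X 0 + X 1) + C d * (X 0 - X 1) - C c * C d with ht
  have hid : ((X 0 - C a) * (X 1 - C b) * (X 0 - X 1 - C c) * (X 0 + X 1 - C d) :
      MvPolynomial (Fin 2) ℝ) - PP
      = -(X 0 * X 1 * t) - s * ((X 0 - X 1) * (X 0 + X 1)) + s * t := by
    rw [hs, ht]; unfold PP; ring
  rw [hid]
  refine le_trans (totalDegree_add _ _) (max_le ?_ ?_)
  · refine le_trans (totalDegree_sub _ _) (max_le ?_ ?_)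
    · rw [totalDegree_neg]
      exact deg_mul_le (deg_mul_le degX degX1) (deg_t c d)
    · exact deg_mul_le (deg_s a b) (deg_mul_le deg_xpm deg_xpp)
  · exact le_trans (deg_mul_le (deg_s a b) (deg_t c d)) (by norm_num)

lemma key (F : ℕ → MvPolynomial (Fin 2) ℝ) (hdeg : ∀ j, (F j).totalDegree ≤ 4)
    (hsub : ∀ j, (F j - PP).totalDegree ≤ 3) :
    ∀ n : ℕ, ((∏ j ∈ Finset.range n, F j) - PP ^ n).totalDegree ≤ 4 * n - 1 := by
  intro n
  induction n with
  | zero => simp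
  | succ n ih =>
    rcases Nat.eq_zero_or_pos n with rfl | hn
    · simpa using hsub 0
    have hid : (∏ j ∈ Finset.range (n + 1), F j) - PP ^ (n + 1)
        = F n * ((∏ j ∈ Finset.range n, F j) - PP ^ n) + (F n - PP) * PP ^ n := by
      rw [Finset.prod_range_succ]; ring
    rw [hid]
    refine le_trans (totalDegree_add _ _) (max_le ?_ ?_)
    · have := deg_mul_le (hdeg n) ih
      omega
    · have hPn : (PP ^ n).totalDegree ≤ 4 * n :=
        le_trans (totalDegree_pow _ _) (by have := degP; nlinarith)
      have := deg_mul_le (hsub n) hPn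
      omega

lemma coeff_XX (a b a' b' : ℕ) :
    coeff (Finsupp.single 0 a + Finsupp.single 1 b)
      ((X (0 : Fin 2) : MvPolynomial (Fin 2) ℝ) ^ a' * X 1 ^ b')
      = if a' = a ∧ b' = b then 1 else 0 := by
  rw [X_pow_eq_monomial, X_pow_eq_monomial, monomial_mul, coeff_monomial, mul_one]
  congr 1
  simp only [eq_iff_iff]
  constructor
  · intro h
    constructor
    · have h0 := DFunLike.congr_fun h (0 : Fin 2)
      simpa [Finsupp.single_apply] using h0
    · have h1 := DFunLike.congr_fun h (1 : Fin 2)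
      simpa [Finsupp.single_apply] using h1
  · rintro ⟨rfl, rfl⟩; rfl

lemma coeff_P (k : ℕ) :
    coeff (Finsupp.single 0 (4 * k) + Finsupp.single 1 (4 * k)) (PP ^ (2 * k))
      = (-1 : ℝ) ^ k * (Nat.choose (2 * k) k) := by
  have h1 : PP ^ (2 * k) = ∑ i ∈ Finset.range (2 * k + 1),
      C (((-1 : ℝ)) ^ (i + 2 * k) * ((2 * k).choose i : ℝ)) *
        (X 0 ^ (2 * k + 2 * i) * X 1 ^ (2 * k + 2 * (2 * k - i))) := by
    have hsp := sub_pow ((X 0 : MvPolynomial (Fin 2) ℝ) ^ 2) (X 1 ^ 2) (2 * k)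
    have hfac : ((X 0 - X 1) * (X 0 + X 1) : MvPolynomial (Fin 2) ℝ) = X 0 ^ 2 - X 1 ^ 2 := by
      ring
    calc PP ^ (2 * k) = X 0 ^ (2 * k) * X 1 ^ (2 * k) * ((X 0 ^ 2 - X 1 ^ 2) ^ (2 * k)) := by
          rw [show PP = X 0 * X 1 * ((X 0 - X 1) * (X 0 + X 1)) by unfold PP; ring, hfac,
            mul_pow, mul_pow]
      _ = _ := by
          rw [hsp, Finset.mul_sum]
          refine Finset.sum_congr rfl fun i hi => ?_
          rw [show ((X 1 : MvPolynomial (Fin 2) ℝ) ^ 2) ^ (2 * k - i) = X 1 ^ (2 * (2 * k - i)) by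
            rw [← pow_mul]]
          simp only [map_mul, map_pow, map_neg, map_one, map_natCast]
          ring
  rw [h1, coeff_sum]
  simp only [coeff_C_mul, coeff_XX]
  rw [Finset.sum_eq_single_of_mem k (by simp [Finset.mem_range]; omega)]
  · rw [if_pos ⟨by omega, by omega⟩, mul_one]
    congr 1
    rw [show k + 2 * k = k + 2 * k from rfl, pow_add, pow_mul]
    norm_num
  · intro i _ hik
    rw [if_neg (by omega), mul_zero]

theorem stmt_7 (k : ℕ) (hk : 1 ≤ k) (α β γ δ : ℕ → ℝ)
    (f : MvPolynomial (Fin 2) ℝ)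
    (hf : f = ∏ j ∈ Finset.range (2 * k),
      ((X 0 - C (α j)) * (X 1 - C (β j)) *
        (X 0 - X 1 - C (γ j)) * (X 0 + X 1 - C (δ j)))) :
    f.coeff (Finsupp.single 0 (4 * k) + Finsupp.single 1 (4 * k)) =
      (-1 : ℝ) ^ k * (Nat.choose (2 * k) k) ∧
    f.coeff (Finsupp.single 0 (4 * k) + Finsupp.single 1 (4 * k)) ≠ 0 := by
  set d : Fin 2 →₀ ℕ := Finsupp.single 0 (4 * k) + Finsupp.single 1 (4 * k) with hd
  have hdsum : ∑ i ∈ d.support, d i = 8 * k := by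
    have hsub : ∑ i ∈ d.support, d i = ∑ i : Fin 2, d i :=
      Finset.sum_subset (Finset.subset_univ _)
        (fun i _ hi => Finsupp.notMem_support_iff.mp hi)
    rw [hsub, Fin.sum_univ_two]
    have h0' : d 0 = 4 * k := by simp [hd, Finsupp.single_apply]
    have h1' : d 1 = 4 * k := by simp [hd, Finsupp.single_apply]
    omega
  have h0 : coeff d (f - PP ^ (2 * k)) = 0 := by
    apply coeff_eq_zero_of_totalDegree_lt
    rw [hdsum]
    have hkey := key (fun j => (X 0 - C (α j)) * (X 1 - C (β j)) *
        (X 0 - X 1 - C (γ j)) * (X 0 + X 1 - C (δ j)))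
      (fun j => degF _ _ _ _) (fun j => degF_sub_P _ _ _ _) (2 * k)
    rw [← hf] at hkey
    omega
  rw [coeff_sub, sub_eq_zero] at h0
  have hcoeff : coeff d f = (-1 : ℝ) ^ k * (Nat.choose (2 * k) k) := by
    rw [h0, hd]; exact coeff_P k
  refine ⟨hcoeff, ?_⟩
  rw [hcoeff]
  have hpos : 0 < (2 * k).choose k := Nat.choose_pos (by omega)
  exact mul_ne_zero (pow_ne_zero _ (by norm_num)) (by exact_mod_cast hpos.ne')
end

section
/- For every integer n ≥ 1, every good placement Q of queens on the n × n board B_n satisfies 2·|Q| ≥ n (that is, the size of Q is at least n/2). -/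
/-
If `2 |Q| < n`, some row `r` is empty. A square `(c, r)` in an empty column then lies on three in a
line with `Q` only if its diagonal or its antidiagonal already carries two queens. At most `|Q|`
columns are occupied, and at most `|Q| / 2` diagonals and `|Q| / 2` antidiagonals carry two queens,
so fewer than `n` squares of row `r` are excluded, and any other one could be added to `Q`.
-/

open Finset

section CrowdedValues

variable {α β : Type*} [DecidableEq β]

def crowdedValues (s : Finset α) (f : α → β) : Finset β :=
  {b ∈ s.image f | 1 < #{a ∈ s | f a = b}}

theorem two_mul_card_crowdedValues_le (s : Finset α) (f : α → β) :
    2 * #(crowdedValues s f) ≤ #s :=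
  calc 2 * #(crowdedValues s f) = ∑ _b ∈ crowdedValues s f, 2 := by
        rw [sum_const, smul_eq_mul, mul_comm]
    _ ≤ ∑ b ∈ crowdedValues s f, #{a ∈ s | f a = b} :=
        sum_le_sum fun _ hb => (mem_filter.1 hb).2
    _ ≤ ∑ b ∈ s.image f, #{a ∈ s | f a = b} := sum_le_sum_of_subset (filter_subset _ _)
    _ = #s := (card_eq_sum_card_image f s).symm

theorem mem_crowdedValues_of_ne {s : Finset α} {f : α → β} {a a' : α} {b : β}
    (ha : a ∈ s) (ha' : a' ∈ s) (hne : a ≠ a') (hb : f a = b) (hb' : f a' = b) :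
    b ∈ crowdedValues s f :=
  mem_filter.2 ⟨mem_image.2 ⟨a, ha, hb⟩,
    one_lt_card.2 ⟨a, mem_filter.2 ⟨ha, hb⟩, a', mem_filter.2 ⟨ha', hb'⟩, hne⟩⟩

end CrowdedValues

theorem exists_pair_sameLine_of_threeInLine_insert {Q : Finset (ℤ × ℤ)} {s : ℤ × ℤ}
    (hQ : ¬ ThreeInLine Q) (h : ThreeInLine (insert s Q)) :
    ∃ u ∈ Q, ∃ v ∈ Q, u ≠ v ∧
      ((u.1 = s.1 ∧ v.1 = s.1) ∨ (u.2 = s.2 ∧ v.2 = s.2) ∨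
       (u.1 - u.2 = s.1 - s.2 ∧ v.1 - v.2 = s.1 - s.2) ∨
       (u.1 + u.2 = s.1 + s.2 ∧ v.1 + v.2 = s.1 + s.2)) := by
  obtain ⟨a, ha, b, hb, c, hc, hab, hac, hbc, hline⟩ := h
  rw [mem_insert] at ha hb hc
  rcases ha with rfl | ha
  · exact ⟨b, hb.resolve_left (Ne.symm hab), c, hc.resolve_left (Ne.symm hac), hbc, by omega⟩
  rcases hb with rfl | hb
  · exact ⟨a, ha, c, hc.resolve_left (Ne.symm hbc), hac, by omega⟩
  rcases hc with rfl | hc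
  · exact ⟨a, ha, b, hb, hab, by omega⟩
  · exact absurd ⟨a, ha, b, hb, c, hc, hab, hac, hbc, hline⟩ hQ

theorem not_threeInLine_insert {Q : Finset (ℤ × ℤ)} {c r : ℤ} (hQ : ¬ ThreeInLine Q)
    (hcol : c ∉ Q.image Prod.fst) (hrow : r ∉ Q.image Prod.snd)
    (hdiag : c - r ∉ crowdedValues Q fun q => q.1 - q.2)
    (hanti : c + r ∉ crowdedValues Q fun q => q.1 + q.2) :
    ¬ ThreeInLine (insert (c, r) Q) := by
  intro h
  obtain ⟨u, hu, v, hv, huv, hline⟩ := exists_pair_sameLine_of_threeInLine_insert hQ h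
  rcases hline with ⟨h, -⟩ | ⟨h, -⟩ | ⟨h, h'⟩ | ⟨h, h'⟩
  · exact hcol (mem_image.2 ⟨u, hu, h⟩)
  · exact hrow (mem_image.2 ⟨u, hu, h⟩)
  · exact hdiag (mem_crowdedValues_of_ne (b := c - r) hu hv huv h h')
  · exact hanti (mem_crowdedValues_of_ne (b := c + r) hu hv huv h h')

theorem stmt_11_general (n : ℕ)
    (Q : Finset (ℤ × ℤ)) (hQ : IsGoodPlacement n Q) : n ≤ 2 * Q.card := by
  obtain ⟨-, hQ3, hmax⟩ := hQ
  by_contra! hlt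
  have hIcc : #(Icc (1 : ℤ) n) = n := by simp
  obtain ⟨r, hr, hrow⟩ := exists_mem_notMem_of_card_lt_card (s := Q.image Prod.snd)
    (t := Icc 1 n) (by have := card_image_le (s := Q) (f := Prod.snd); omega)
  set attacked := Q.image Prod.fst ∪ (crowdedValues Q fun q => q.1 - q.2).image (· + r) ∪
    (crowdedValues Q fun q => q.1 + q.2).image (· - r)
  have hattacked : #attacked < #(Icc (1 : ℤ) n) :=
    calc #attacked ≤ #Q + #(crowdedValues Q fun q => q.1 - q.2) +
          #(crowdedValues Q fun q => q.1 + q.2) :=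
        (card_union_le _ _).trans <| add_le_add
          ((card_union_le _ _).trans (add_le_add card_image_le card_image_le)) card_image_le
      _ < #(Icc (1 : ℤ) n) := by
        have := two_mul_card_crowdedValues_le Q fun q => q.1 - q.2
        have := two_mul_card_crowdedValues_le Q fun q => q.1 + q.2
        omega
  obtain ⟨c, hc, hcfree⟩ := exists_mem_notMem_of_card_lt_card hattacked
  simp only [attacked, mem_union, not_or] at hcfree
  obtain ⟨⟨hcol, hdiag⟩, hanti⟩ := hcfree
  refine not_threeInLine_insert hQ3 hcol hrow (fun h => hdiag ?_) (fun h => hanti ?_)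
    (hmax (c, r) (mem_product.2 ⟨hc, hr⟩) fun h => hcol (mem_image_of_mem Prod.fst h))
  · exact mem_image.2 ⟨c - r, h, sub_add_cancel c r⟩
  · exact mem_image.2 ⟨c + r, h, add_sub_cancel_right c r⟩

theorem stmt_11 (n : ℕ) (hn : 1 ≤ n)
    (Q : Finset (ℤ × ℤ)) (hQ : IsGoodPlacement n Q) : n ≤ 2 * Q.card :=
  stmt_11_general n Q hQ
end
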